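/- arXiv:2403.02826 — 6 statements merged into one kernel-verified Lean document; each statement's English description precedes it below -/
import Mathlib

section
/- Let T be a finite nonempty tree (a connected acyclic simple graph). Then: (1) χ_ei(T) = 1 if and only if the diameter of T is at most 2; and (2) χ_ei(T) = 2 if and only if the diameter of T is at least 3. -/
open SimpleGraph

/-- `u` and `v` are the endpoints of a path on 4 vertices (a `P₄`, of length 3) in `G`:
a walk `u - x - y - v` with pairwise distinct vertices and consecutive vertices adjacent. -/
def P4Ends {V : Type*} (G : SimpleGraph V) (u v : V) : Prop :=
  ∃ x y : V, u ≠ x ∧ u ≠ y ∧ u ≠ v ∧ x ≠ y ∧ x ≠ v ∧ y ≠ v ∧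
    G.Adj u x ∧ G.Adj x y ∧ G.Adj y v

/-- `f` is an e-injective coloring of `G` (with colors in `Fin k`). -/
def IsEInjColoring {V : Type*} (G : SimpleGraph V) {k : ℕ} (f : V → Fin k) : Prop :=
  ∀ u v : V, P4Ends G u v → f u ≠ f v

/-- The e-injective chromatic number `χ_ei`. -/
noncomputable def eChi {V : Type*} (G : SimpleGraph V) : ℕ :=
  sInf {k : ℕ | ∃ f : V → Fin k, IsEInjColoring G f}

/-- The usual chromatic number, as a natural number. -/
noncomputable def chi {V : Type*} (G : SimpleGraph V) : ℕ :=
  sInf {k : ℕ | ∃ f : V → Fin k, ∀ u v : V, G.Adj u v → f u ≠ f v}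

/-- The injective chromatic number `χ_i`. -/
noncomputable def iChi {V : Type*} (G : SimpleGraph V) : ℕ :=
  sInf {k : ℕ | ∃ f : V → Fin k, ∀ u v : V, u ≠ v →
    (∃ w, G.Adj w u ∧ G.Adj w v) → f u ≠ f v}

/-- The 2-distance chromatic number `χ₂`. -/
noncomputable def dist2Chi {V : Type*} (G : SimpleGraph V) : ℕ :=
  sInf {k : ℕ | ∃ f : V → Fin k, ∀ u v : V, u ≠ v →
    (G.Adj u v ∨ ∃ w, G.Adj u w ∧ G.Adj w v) → f u ≠ f v}

/-- The join `G ∨ H` of two graphs on disjoint vertex sets. -/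
def joinGraph {V W : Type*} (G : SimpleGraph V) (H : SimpleGraph W) :
    SimpleGraph (V ⊕ W) where
  Adj x y :=
    match x, y with
    | Sum.inl a, Sum.inl b => G.Adj a b
    | Sum.inr a, Sum.inr b => H.Adj a b
    | Sum.inl _, Sum.inr _ => True
    | Sum.inr _, Sum.inl _ => True
  symm := ⟨by rintro (a | a) (b | b) h <;> simp_all <;> exact h.symm⟩
  loopless := ⟨by rintro (a | a) h <;> simp_all⟩

/-- The strong product `G ⊠ H`. -/
def strongProd {V W : Type*} (G : SimpleGraph V) (H : SimpleGraph W) :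
    SimpleGraph (V × W) where
  Adj x y := (x.1 = y.1 ∧ H.Adj x.2 y.2) ∨ (x.2 = y.2 ∧ G.Adj x.1 y.1) ∨
    (G.Adj x.1 y.1 ∧ H.Adj x.2 y.2)
  symm := ⟨by
    rintro ⟨a, u⟩ ⟨b, v⟩ (⟨h1, h2⟩ | ⟨h1, h2⟩ | ⟨h1, h2⟩)
    · exact Or.inl ⟨h1.symm, h2.symm⟩
    · exact Or.inr (Or.inl ⟨h1.symm, h2.symm⟩)
    · exact Or.inr (Or.inr ⟨h1.symm, h2.symm⟩)⟩
  loopless := ⟨by rintro ⟨a, u⟩ (⟨_, h⟩ | ⟨_, h⟩ | ⟨h, _⟩) <;> exact h.ne rfl⟩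


section Aux
variable {V : Type*} {T : SimpleGraph V}

lemma tree_path_length (hT : T.IsTree) {u v : V}
    (p : T.Walk u v) (hp : p.IsPath) : p.length = T.dist u v := by
  classical
  obtain ⟨q, hq⟩ := hT.isConnected.exists_walk_length_eq_dist u v
  have h1 : q.bypass.length ≤ T.dist u v := hq ▸ q.length_bypass_le
  have h2 : T.dist u v ≤ q.bypass.length := SimpleGraph.dist_le _
  have hpq : p = q.bypass := (hT.existsUnique_path u v).unique hp q.bypass_isPath
  rw [hpq]; omega

lemma tree_adj_dist (hT : T.IsTree) (r : V) {u v : V} (h : T.Adj u v) :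
    T.dist r v = T.dist r u + 1 ∨ T.dist r u = T.dist r v + 1 := by
  classical
  obtain ⟨P, hP, -⟩ := hT.existsUnique_path r u
  by_cases hv : v ∈ P.support
  · right
    have hsplit := P.take_spec hv
    have hlen : (P.takeUntil v hv).length + (P.dropUntil v hv).length = P.length := by
      have := congrArg Walk.length hsplit
      rwa [Walk.length_append] at this
    have h1 : (P.takeUntil v hv).length = T.dist r v :=
      tree_path_length hT _ (hP.takeUntil hv)
    have h2 : (P.dropUntil v hv).length = T.dist v u :=
      tree_path_length hT _ (hP.dropUntil hv)
    have h3 : P.length = T.dist r u := tree_path_length hT _ hP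
    have h4 : T.dist v u = 1 := SimpleGraph.dist_eq_one_iff_adj.mpr h.symm
    omega
  · left
    have hQ : (P.concat h).IsPath := by
      rw [Walk.isPath_def, Walk.support_concat]
      simpa using List.Nodup.concat hv hP.support_nodup
    have h1 : (P.concat h).length = T.dist r v := tree_path_length hT _ hQ
    have h2 : P.length = T.dist r u := tree_path_length hT _ hP
    rw [Walk.length_concat] at h1
    omega

lemma p4_dist (hT : T.IsTree) {u v : V} (h : P4Ends T u v) : T.dist u v = 3 := by
  obtain ⟨x, y, hux, huy, huv, hxy, hxv, hyv, a1, a2, a3⟩ := h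
  have hp : (Walk.cons a1 (Walk.cons a2 (Walk.cons a3 Walk.nil))).IsPath := by
    simp [Walk.isPath_def, hux, huy, huv, hxy, hxv, hyv]
  have := tree_path_length hT _ hp
  simpa using this.symm

lemma p4_of_dist (hT : T.IsTree) {u v : V} (h : 3 ≤ T.dist u v) :
    ∃ a b : V, P4Ends T a b := by
  classical
  obtain ⟨p, hp⟩ := hT.isConnected.exists_walk_length_eq_dist u v
  have h1 : p.bypass.length ≤ T.dist u v := hp ▸ p.length_bypass_le
  have h2 : T.dist u v ≤ p.bypass.length := SimpleGraph.dist_le _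
  obtain ⟨q, hqp, hql⟩ : ∃ q : T.Walk u v, q.IsPath ∧ 3 ≤ q.length :=
    ⟨p.bypass, p.bypass_isPath, by omega⟩
  clear h h1 h2 hp
  match q with
  | Walk.nil => simp at hql
  | Walk.cons _ Walk.nil => simp at hql
  | Walk.cons _ (Walk.cons _ Walk.nil) => simp at hql
  | Walk.cons (v := a) h1 (Walk.cons (v := b) h2 (Walk.cons (v := c) h3 q3)) =>
    rw [Walk.cons_isPath_iff] at hqp
    obtain ⟨hqp, hu⟩ := hqp
    rw [Walk.cons_isPath_iff] at hqp
    obtain ⟨hqp, ha⟩ := hqp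
    rw [Walk.cons_isPath_iff] at hqp
    obtain ⟨hqp, hb⟩ := hqp
    simp only [Walk.support_cons, List.mem_cons] at hu ha
    push_neg at hu ha
    refine ⟨u, c, a, b, hu.1, hu.2.1, ?_, h2.ne, ?_, ?_, h1, h2, h3⟩
    · exact fun h => hu.2.2 (h ▸ q3.start_mem_support)
    · exact fun h => ha.2 (h ▸ q3.start_mem_support)
    · exact fun h => hb (h ▸ q3.start_mem_support)
end Aux

lemma tree_parity {V : Type*} {T : SimpleGraph V} (hT : T.IsTree) (r : V) {u v : V} (h : T.Adj u v) :
    T.dist r u % 2 ≠ T.dist r v % 2 := by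
  rcases tree_adj_dist hT r h with h | h <;> omega

lemma tree_two_coloring {V : Type*} {T : SimpleGraph V} (hT : T.IsTree) [Nonempty V] :
    ∃ f : V → Fin 2, IsEInjColoring T f := by
  obtain ⟨r⟩ := ‹Nonempty V›
  refine ⟨fun v => ⟨T.dist r v % 2, by omega⟩, ?_⟩
  rintro u v ⟨x, y, -, -, -, -, -, -, a1, a2, a3⟩
  have h1 := tree_parity hT r a1
  have h2 := tree_parity hT r a2
  have h3 := tree_parity hT r a3
  dsimp only
  simp only [ne_eq, Fin.mk.injEq]
  omega

theorem stmt_3 {V : Type*} [Fintype V] [Nonempty V] (T : SimpleGraph V) (hT : T.IsTree) :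
    (eChi T = 1 ↔ T.diam ≤ 2) ∧ (eChi T = 2 ↔ 3 ≤ T.diam) := by
  have hconn := hT.isConnected
  have hetop : T.ediam ≠ ⊤ := by
    obtain ⟨u, v, huv⟩ := exists_edist_eq_ediam_of_finite (G := T)
    rw [← huv]
    exact edist_ne_top_iff_reachable.mpr (hconn u v)
  by_cases hp : ∃ u v : V, P4Ends T u v
  · obtain ⟨u, v, huv⟩ := hp
    have hd3 : 3 ≤ T.diam := by
      have h1 := p4_dist hT huv
      have h2 := SimpleGraph.dist_le_diam (G := T) hetop (u := u) (v := v)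
      omega
    have he2 : eChi T = 2 := by
      unfold eChi
      set S := {k : ℕ | ∃ f : V → Fin k, IsEInjColoring T f} with hS
      have h2mem : 2 ∈ S := tree_two_coloring hT
      have hle : sInf S ≤ 2 := Nat.sInf_le h2mem
      have hmem : sInf S ∈ S := Nat.sInf_mem ⟨2, h2mem⟩
      have h0 : (0 : ℕ) ∉ S := by rintro ⟨f, -⟩; exact (f (Classical.arbitrary V)).elim0
      have h1 : (1 : ℕ) ∉ S := by
        rintro ⟨f, hf⟩
        exact hf u v huv (Subsingleton.elim _ _)
      have hne0 : sInf S ≠ 0 := fun h => h0 (h ▸ hmem)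
      have hne1 : sInf S ≠ 1 := fun h => h1 (h ▸ hmem)
      omega
    constructor <;> constructor <;> intro h <;> omega
  · have hd2 : T.diam ≤ 2 := by
      by_contra hd
      obtain ⟨u, v, hduv⟩ := exists_dist_eq_diam (G := T)
      exact hp (p4_of_dist (u := u) (v := v) hT (by omega))
    have he1 : eChi T = 1 := by
      unfold eChi
      set S := {k : ℕ | ∃ f : V → Fin k, IsEInjColoring T f} with hS
      have h1mem : 1 ∈ S := ⟨fun _ => 0, fun a b hab => absurd ⟨a, b, hab⟩ hp⟩
      have hle : sInf S ≤ 1 := Nat.sInf_le h1mem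
      have hmem : sInf S ∈ S := Nat.sInf_mem ⟨1, h1mem⟩
      have h0 : (0 : ℕ) ∉ S := by rintro ⟨f, -⟩; exact (f (Classical.arbitrary V)).elim0
      have hne0 : sInf S ≠ 0 := fun h => h0 (h ▸ hmem)
      omega
    constructor <;> constructor <;> intro h <;> omega
end

section
/- Let G be a finite connected simple graph of diameter exactly 3. Then χ_ei(G) ≥ ρ(G) ≥ γ_2(G), where ρ(G) is the packing number of G and γ_2(G) is the 2-distance domination number of G. -/
open SimpleGraph

/-- The packing number `ρ(G)`: the maximum cardinality of a set of vertices whose closed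
neighborhoods are pairwise disjoint. -/
noncomputable def packingNumber {V : Type*} (G : SimpleGraph V) : ℕ :=
  sSup {k : ℕ | ∃ B : Finset V, B.card = k ∧ ∀ u ∈ B, ∀ v ∈ B, u ≠ v →
    ∀ w : V, ¬((w = u ∨ G.Adj u w) ∧ (w = v ∨ G.Adj v w))}

/-- The 2-distance domination number `γ₂(G)`: the minimum cardinality of a set `D` such that
every vertex is at distance at most 2 from some vertex of `D`. -/
noncomputable def gamma2 {V : Type*} (G : SimpleGraph V) : ℕ :=
  sInf {k : ℕ | ∃ D : Finset V, D.card = k ∧ ∀ v : V, ∃ d ∈ D,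
    d = v ∨ G.Adj d v ∨ ∃ w, G.Adj d w ∧ G.Adj w v}

section Aux
variable {V : Type*} (G : SimpleGraph V)

/-- Any two distinct vertices of a packing are P4-endpoints when diam = 3. -/
lemma packing_pair_p4 (hconn : G.Connected) (hdiam : G.diam = 3)
    {u v : V} (huv : u ≠ v)
    (h : ∀ w : V, ¬((w = u ∨ G.Adj u w) ∧ (w = v ∨ G.Adj v w))) :
    P4Ends G u v := by
  classical
  have hnadj : ¬ G.Adj u v := fun hA => h v ⟨Or.inr hA, Or.inl rfl⟩
  have hne : G.ediam ≠ ⊤ := G.ediam_ne_top_of_diam_ne_zero (by omega)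
  have hdle : G.dist u v ≤ 3 := hdiam ▸ G.dist_le_diam hne
  obtain ⟨p, hp⟩ := hconn.exists_walk_length_eq_dist u v
  have hdpos : G.dist u v ≠ 0 := by
    intro h0
    rcases SimpleGraph.dist_eq_zero_iff_eq_or_not_reachable.mp h0 with rfl | hr
    · exact huv rfl
    · exact hr (hconn u v)
  have hd1 : G.dist u v ≠ 1 := fun h1 =>
    hnadj (SimpleGraph.dist_eq_one_iff_adj.mp h1)
  have hd2 : G.dist u v ≠ 2 := by
    intro h2
    obtain ⟨q, hq⟩ := hconn.exists_walk_length_eq_dist u v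
    rw [h2] at hq
    cases q with
    | nil => simp at hq
    | cons hadj q' =>
      cases q' with
      | nil => simp at hq
      | cons hadj2 q'' =>
        cases q'' with
        | nil =>
          exact h _ ⟨Or.inr hadj, Or.inr hadj2.symm⟩
        | cons h3 q3 => simp [SimpleGraph.Walk.length_cons] at hq
  have hd3 : G.dist u v = 3 := by omega
  rw [hd3] at hp
  cases p with
  | nil => simp at hp
  | cons h1 p1 =>
    cases p1 with
    | nil => simp at hp
    | cons h2 p2 =>
      cases p2 with
      | nil => simp at hp
      | cons h3 p3 =>
        cases p3 with
        | cons h4 p4 => simp [SimpleGraph.Walk.length_cons] at hp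
        | nil =>
          rename_i x y
          refine ⟨x, y, h1.ne, ?_, huv, h2.ne, ?_, h3.ne, h1, h2, h3⟩
          · rintro rfl; exact hnadj h3
          · rintro rfl; exact hnadj h1

end Aux

theorem stmt_5 {V : Type*} [Fintype V] (G : SimpleGraph V)
    (hconn : G.Connected) (hdiam : G.diam = 3) :
    gamma2 G ≤ packingNumber G ∧ packingNumber G ≤ eChi G := by
  classical
  set S : Set ℕ := {k : ℕ | ∃ B : Finset V, B.card = k ∧ ∀ u ∈ B, ∀ v ∈ B, u ≠ v →
    ∀ w : V, ¬((w = u ∨ G.Adj u w) ∧ (w = v ∨ G.Adj v w))} with hS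
  have hSne : S.Nonempty := ⟨0, ∅, by simp⟩
  have hSbdd : BddAbove S := by
    refine ⟨Fintype.card V, fun k hk => ?_⟩
    obtain ⟨B, hB, -⟩ := hk
    exact hB ▸ Finset.card_le_univ B
  have hmem : packingNumber G ∈ S := Nat.sSup_mem hSne hSbdd
  obtain ⟨B, hBcard, hBpack⟩ := hmem
  constructor
  · -- gamma2 ≤ packingNumber : B is 2-distance dominating
    have hdom : ∀ v : V, ∃ d ∈ B, d = v ∨ G.Adj d v ∨ ∃ w, G.Adj d w ∧ G.Adj w v := by
      intro v
      by_contra hv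
      push_neg at hv
      have hvB : v ∉ B := fun hvB => (hv v hvB).1 rfl
      have hpack' : ∀ u ∈ insert v B, ∀ u' ∈ insert v B, u ≠ u' →
          ∀ w : V, ¬((w = u ∨ G.Adj u w) ∧ (w = u' ∨ G.Adj u' w)) := by
        have key : ∀ d ∈ B, ∀ w : V,
            ¬((w = v ∨ G.Adj v w) ∧ (w = d ∨ G.Adj d w)) := by
          intro d hd w hw
          obtain ⟨h1, h2⟩ := hw
          have := hv d hd
          rcases h1 with rfl | h1 <;> rcases h2 with rfl | h2
          · exact this.1 rfl
          · exact this.2.1 h2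
          · exact this.2.1 h1.symm
          · exact this.2.2 w h2 h1.symm
        intro a ha b hb hnab w
        rcases Finset.mem_insert.mp ha with rfl | haB
        · rcases Finset.mem_insert.mp hb with rfl | hbB
          · exact absurd rfl hnab
          · exact key b hbB w
        · rcases Finset.mem_insert.mp hb with rfl | hbB
          · intro hw; exact key a haB w ⟨hw.2, hw.1⟩
          · exact hBpack a haB b hbB hnab w
      have : B.card + 1 ∈ S := ⟨insert v B, by rw [Finset.card_insert_of_notMem hvB], hpack'⟩
      have hle : B.card + 1 ≤ packingNumber G := le_csSup hSbdd this
      omega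
    calc gamma2 G ≤ B.card := Nat.sInf_le ⟨B, rfl, hdom⟩
    _ = packingNumber G := hBcard
  · -- packingNumber ≤ eChi
    have hEne : {k : ℕ | ∃ f : V → Fin k, IsEInjColoring G f}.Nonempty := by
      refine ⟨Fintype.card V, fun x => Fintype.equivFin V x, ?_⟩
      intro u v h huv
      obtain ⟨x, y, -, -, hne, -⟩ := h
      exact hne ((Fintype.equivFin V).injective huv)
    obtain ⟨f, hf⟩ : ∃ f : V → Fin (eChi G), IsEInjColoring G f := Nat.sInf_mem hEne
    rw [← hBcard]
    have : B.card ≤ (Finset.univ : Finset (Fin (eChi G))).card := by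
      apply Finset.card_le_card_of_injOn f (fun _ _ => Finset.mem_univ _)
      intro u hu v hv hfe
      by_contra hne
      exact hf u v (packing_pair_p4 G hconn hdiam hne (hBpack u hu v hv hne)) hfe
    simpa using this
end

section
/- Let G and H be finite simple graphs with no isolated vertices, and suppose that in each of G and H, the two endpoints of every path on 4 vertices are adjacent or have a common neighbor. Then in the strong product G ⊠ H, the two endpoints of every path on 4 vertices are adjacent or have a common neighbor. -/
open SimpleGraph

lemma strongProd_factors {V W : Type*} {G : SimpleGraph V} {H : SimpleGraph W}
    {x y : V × W} (h : (strongProd G H).Adj x y) :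
    (x.1 = y.1 ∨ G.Adj x.1 y.1) ∧ (x.2 = y.2 ∨ H.Adj x.2 y.2) := by
  rcases h with ⟨h1, h2⟩ | ⟨h1, h2⟩ | ⟨h1, h2⟩ <;> exact ⟨by tauto, by tauto⟩

lemma chainQ {V : Type*} (G : SimpleGraph V)
    (hG : ∀ u v : V, P4Ends G u v → G.Adj u v ∨ ∃ w, G.Adj w u ∧ G.Adj w v)
    (a b c d : V) (h1 : a = b ∨ G.Adj a b) (h2 : b = c ∨ G.Adj b c)
    (h3 : c = d ∨ G.Adj c d) :
    (a = d ∨ G.Adj a d) ∨ ∃ w, G.Adj w a ∧ G.Adj w d := by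
  rcases h1 with rfl | h1
  · rcases h2 with rfl | h2
    · exact Or.inl h3
    · rcases h3 with rfl | h3
      · exact Or.inl (Or.inr h2)
      · exact Or.inr ⟨c, h2.symm, h3⟩
  · rcases h2 with rfl | h2
    · rcases h3 with rfl | h3
      · exact Or.inl (Or.inr h1)
      · exact Or.inr ⟨b, h1.symm, h3⟩
    · rcases h3 with rfl | h3
      · exact Or.inr ⟨b, h1.symm, h2⟩
      · -- genuine 3-step walk
        by_cases hac : a = c
        · subst hac; exact Or.inl (Or.inr h3)
        by_cases hbd : b = d
        · subst hbd; exact Or.inl (Or.inr h1)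
        by_cases had : a = d
        · exact Or.inl (Or.inl had)
        · exact (hG a d ⟨b, c, h1.ne, hac, had, h2.ne, hbd, h3.ne, h1, h2, h3⟩).imp Or.inr id

theorem stmt_7 {V W : Type*} [Fintype V] [Fintype W] (G : SimpleGraph V) (H : SimpleGraph W)
    (hGiso : ∀ v : V, ∃ u, G.Adj v u) (hHiso : ∀ v : W, ∃ u, H.Adj v u)
    (hG : ∀ u v : V, P4Ends G u v → G.Adj u v ∨ ∃ w, G.Adj w u ∧ G.Adj w v)
    (hH : ∀ u v : W, P4Ends H u v → H.Adj u v ∨ ∃ w, H.Adj w u ∧ H.Adj w v) :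
    ∀ p q : V × W, P4Ends (strongProd G H) p q →
      (strongProd G H).Adj p q ∨
        ∃ r : V × W, (strongProd G H).Adj r p ∧ (strongProd G H).Adj r q := by
  rintro ⟨a, s⟩ ⟨d, v⟩ ⟨⟨b, t⟩, ⟨c, u⟩, _, _, hne, _, _, _, hpx, hxy, hyq⟩
  obtain ⟨g1, e1⟩ := strongProd_factors hpx
  obtain ⟨g2, e2⟩ := strongProd_factors hxy
  obtain ⟨g3, e3⟩ := strongProd_factors hyq
  have QG := chainQ G hG a b c d g1 g2 g3
  have QH := chainQ H hH s t u v e1 e2 e3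
  rcases QG with hG' | ⟨m, hm1, hm2⟩
  · rcases QH with hH' | ⟨w, hw1, hw2⟩
    · left
      rcases hG' with rfl | hG' <;> rcases hH' with rfl | hH'
      · exact absurd rfl hne
      · exact Or.inl ⟨rfl, hH'⟩
      · exact Or.inr (Or.inl ⟨rfl, hG'⟩)
      · exact Or.inr (Or.inr ⟨hG', hH'⟩)
    · right
      refine ⟨(a, w), Or.inl ⟨rfl, hw1⟩, ?_⟩
      rcases hG' with rfl | hG'
      · exact Or.inl ⟨rfl, hw2⟩
      · exact Or.inr (Or.inr ⟨hG', hw2⟩)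
  · rcases QH with hH' | ⟨w, hw1, hw2⟩
    · right
      refine ⟨(m, s), Or.inr (Or.inl ⟨rfl, hm1⟩), ?_⟩
      rcases hH' with rfl | hH'
      · exact Or.inr (Or.inl ⟨rfl, hm2⟩)
      · exact Or.inr (Or.inr ⟨hm2, hH'⟩)
    · exact Or.inr ⟨(m, w), Or.inr (Or.inr ⟨hm1, hw1⟩), Or.inr (Or.inr ⟨hm2, hw2⟩)⟩
end

section
/- Let G = K_{n_1,…,n_r} be a complete r-partite graph with r ≥ 3 parts (each n_i ≥ 1) and total order n = n_1 + ⋯ + n_r. Then: χ_ei(G) = 1 if r = 3 and G = K_{1,1,1}; χ_ei(G) = n − 1 if r = 3, n ≥ 4, and the three part sizes are n − 2, 1, 1 in some order; and χ_ei(G) = n in all other cases. -/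
open SimpleGraph

section MyAux

private lemma sig_ne_of_fst {r : ℕ} {n : Fin r → ℕ} {u v : (i : Fin r) × Fin (n i)}
    (h : u.1 ≠ v.1) : u ≠ v := fun he => h (congrArg Sigma.fst he)

private lemma mk_ne_mk {r : ℕ} {n : Fin r → ℕ} {i : Fin r} {a b : Fin (n i)} (h : a ≠ b) :
    (⟨i, a⟩ : (i : Fin r) × Fin (n i)) ≠ ⟨i, b⟩ := by simpa using h

private lemma adjG {r : ℕ} {n : Fin r → ℕ} {u v : (i : Fin r) × Fin (n i)}
    (h : u.1 ≠ v.1) : (completeMultipartiteGraph (fun i : Fin r => Fin (n i))).Adj u v := by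
  simpa using h

private lemma P4_of_fsts {r : ℕ} {n : Fin r → ℕ} (u v x y : (i : Fin r) × Fin (n i))
    (hux : u.1 ≠ x.1) (huy : u ≠ y) (huv : u ≠ v) (hxy : x.1 ≠ y.1) (hxv : x ≠ v)
    (hyv : y.1 ≠ v.1) :
    P4Ends (completeMultipartiteGraph (fun i : Fin r => Fin (n i))) u v :=
  ⟨x, y, sig_ne_of_fst hux, huy, huv, sig_ne_of_fst hxy, hxv, sig_ne_of_fst hyv,
    adjG hux, adjG hxy, adjG hyv⟩

private lemma P4_symm {V : Type*} {G : SimpleGraph V} {u v : V} (h : P4Ends G u v) :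
    P4Ends G v u := by
  obtain ⟨x, y, h1, h2, h3, h4, h5, h6, a1, a2, a3⟩ := h
  exact ⟨y, x, h6.symm, h5.symm, h3.symm, h4.symm, h2.symm, h1.symm,
    a3.symm, a2.symm, a1.symm⟩

private lemma exists_two_ne {r : ℕ} (hr : 3 ≤ r) (a : Fin r) :
    ∃ b c : Fin r, b ≠ c ∧ b ≠ a ∧ c ≠ a := by
  have h : 1 < (Finset.univ.erase a).card := by
    rw [Finset.card_erase_of_mem (Finset.mem_univ a), Finset.card_univ, Fintype.card_fin]
    omega
  obtain ⟨b, hb, c, hc, hbc⟩ := Finset.one_lt_card.mp h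
  exact ⟨b, c, hbc, Finset.ne_of_mem_erase hb, Finset.ne_of_mem_erase hc⟩

private lemma exists_one_ne {r : ℕ} (hr : 3 ≤ r) (a b : Fin r) :
    ∃ c : Fin r, c ≠ a ∧ c ≠ b := by
  have h2 : ({a, b} : Finset (Fin r)).card ≤ 2 := Finset.card_insert_le a {b}
  have h : 0 < ((Finset.univ : Finset (Fin r)) \ {a, b}).card := by
    rw [Finset.card_sdiff_of_subset (Finset.subset_univ _), Finset.card_univ, Fintype.card_fin]
    omega
  obtain ⟨c, hc⟩ := Finset.card_pos.mp h
  rw [Finset.mem_sdiff, Finset.mem_insert, Finset.mem_singleton] at hc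
  exact ⟨c, fun h => hc.2 (Or.inl h), fun h => hc.2 (Or.inr h)⟩

private lemma exists_two_ne_two {r : ℕ} (hr : 4 ≤ r) (a b : Fin r) :
    ∃ c d : Fin r, c ≠ d ∧ c ≠ a ∧ c ≠ b ∧ d ≠ a ∧ d ≠ b := by
  have h2 : ({a, b} : Finset (Fin r)).card ≤ 2 := Finset.card_insert_le a {b}
  have h : 1 < ((Finset.univ : Finset (Fin r)) \ {a, b}).card := by
    rw [Finset.card_sdiff_of_subset (Finset.subset_univ _), Finset.card_univ, Fintype.card_fin]
    omega
  obtain ⟨c, hc, d, hd, hcd⟩ := Finset.one_lt_card.mp h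
  rw [Finset.mem_sdiff, Finset.mem_insert, Finset.mem_singleton] at hc hd
  exact ⟨c, d, hcd, fun h => hc.2 (Or.inl h), fun h => hc.2 (Or.inr h),
    fun h => hd.2 (Or.inl h), fun h => hd.2 (Or.inr h)⟩

private lemma P4_same {r : ℕ} (hr : 3 ≤ r) {n : Fin r → ℕ} (hn : ∀ i, 1 ≤ n i)
    {u v : (i : Fin r) × Fin (n i)} (h1 : u.1 = v.1) (hne : u ≠ v) :
    P4Ends (completeMultipartiteGraph (fun i : Fin r => Fin (n i))) u v := by
  obtain ⟨b, c, hbc, hb, hc⟩ := exists_two_ne hr u.1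
  exact P4_of_fsts u v ⟨b, ⟨0, hn b⟩⟩ ⟨c, ⟨0, hn c⟩⟩ (Ne.symm hb)
    (sig_ne_of_fst (Ne.symm hc)) hne hbc (sig_ne_of_fst (h1 ▸ hb)) (h1 ▸ hc)

private lemma P4_cross_left {r : ℕ} {n : Fin r → ℕ} (hn : ∀ i, 1 ≤ n i)
    {u v : (i : Fin r) × Fin (n i)} (hne : u.1 ≠ v.1) (R : Fin r) (hR1 : R ≠ u.1)
    (hR2 : R ≠ v.1) (h2 : 2 ≤ n u.1) :
    P4Ends (completeMultipartiteGraph (fun i : Fin r => Fin (n i))) u v := by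
  obtain ⟨i, a⟩ := u
  simp only at hne h2 hR1
  haveI : Nontrivial (Fin (n i)) := Fin.nontrivial_iff_two_le.mpr h2
  obtain ⟨y', hy'⟩ := exists_ne a
  exact P4_of_fsts ⟨i, a⟩ v ⟨R, ⟨0, hn R⟩⟩ ⟨i, y'⟩ (Ne.symm hR1) (mk_ne_mk (Ne.symm hy'))
    (sig_ne_of_fst hne) hR1 (sig_ne_of_fst hR2) hne

private lemma fin3_pigeon {a b c d : Fin 3} (hab : a ≠ b) (hac : a ≠ c) (hbc : b ≠ c)
    (hda : d ≠ a) (hdb : d ≠ b) : d = c := by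
  have h1 : a.val ≠ b.val := fun h => hab (Fin.ext h)
  have h2 : a.val ≠ c.val := fun h => hac (Fin.ext h)
  have h3 : b.val ≠ c.val := fun h => hbc (Fin.ext h)
  have h4 : d.val ≠ a.val := fun h => hda (Fin.ext h)
  have h5 : d.val ≠ b.val := fun h => hdb (Fin.ext h)
  have := a.isLt; have := b.isLt; have := c.isLt; have := d.isLt
  exact Fin.ext (by omega)

end MyAux

theorem stmt_15 (r : ℕ) (hr : 3 ≤ r) (n : Fin r → ℕ) (hn : ∀ i, 1 ≤ n i)
    (N : ℕ) (hN : N = ∑ i, n i) :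
    ((r = 3 ∧ ∀ i, n i = 1) →
      eChi (completeMultipartiteGraph (fun i : Fin r => Fin (n i))) = 1) ∧
    ((r = 3 ∧ 4 ≤ N ∧ ∃ j, n j = N - 2 ∧ ∀ i, i ≠ j → n i = 1) →
      eChi (completeMultipartiteGraph (fun i : Fin r => Fin (n i))) = N - 1) ∧
    (¬(r = 3 ∧ ∀ i, n i = 1) →
      ¬(r = 3 ∧ 4 ≤ N ∧ ∃ j, n j = N - 2 ∧ ∀ i, i ≠ j → n i = 1) →
      eChi (completeMultipartiteGraph (fun i : Fin r => Fin (n i))) = N) := by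

  have cardV : Fintype.card ((i : Fin r) × Fin (n i)) = N := by simp [hN]
  have hNS : N ∈ {k : ℕ | ∃ f : (i : Fin r) × Fin (n i) → Fin k,
      IsEInjColoring (completeMultipartiteGraph (fun i : Fin r => Fin (n i))) f} := by
    refine ⟨fun v => Fin.cast cardV (Fintype.equivFin _ v), ?_⟩
    rintro u v ⟨x, y, -, -, huv, -⟩ he
    exact huv (Equiv.injective _ (Fin.cast_injective _ he))
  refine ⟨?_, ?_, ?_⟩
  · -- Case K_{1,1,1}
    rintro ⟨hr3, h1⟩
    subst hr3
    unfold eChi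
    have hc3 : Fintype.card ((i : Fin 3) × Fin (n i)) = 3 := by simp [h1]
    have noP4 : ∀ u v : (i : Fin 3) × Fin (n i),
        ¬ P4Ends (completeMultipartiteGraph (fun i : Fin 3 => Fin (n i))) u v := by
      rintro u v ⟨x, y, h1', h2', h3', h4', h5', h6', -, -, -⟩
      have hle := Finset.card_le_univ ({u, x, y, v} : Finset ((i : Fin 3) × Fin (n i)))
      have h4c : ({u, x, y, v} : Finset ((i : Fin 3) × Fin (n i))).card = 4 := by
        rw [Finset.card_insert_of_notMem (by simp [h1', h2', h3']),
          Finset.card_insert_of_notMem (by simp [h4', h5']),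
          Finset.card_insert_of_notMem (by simp [h6']), Finset.card_singleton]
      omega
    have h1S : 1 ∈ {k : ℕ | ∃ f : (i : Fin 3) × Fin (n i) → Fin k,
        IsEInjColoring (completeMultipartiteGraph (fun i : Fin 3 => Fin (n i))) f} :=
      ⟨fun _ => 0, fun u v hp => absurd hp (noP4 u v)⟩
    refine le_antisymm (Nat.sInf_le h1S) ?_
    have hmem := Nat.sInf_mem (⟨1, h1S⟩ : Set.Nonempty _)
    rcases Nat.eq_zero_or_pos (sInf {k : ℕ | ∃ f : (i : Fin 3) × Fin (n i) → Fin k,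
        IsEInjColoring (completeMultipartiteGraph (fun i : Fin 3 => Fin (n i))) f}) with h0 | h
    · rw [h0] at hmem
      obtain ⟨f, -⟩ := hmem
      exact absurd (f ⟨⟨0, by omega⟩, ⟨0, hn _⟩⟩).isLt (by omega)
    · exact h
  · -- Case K_{N-2,1,1}
    rintro ⟨hr3, hN4, j, hj, hother⟩
    subst hr3
    unfold eChi
    obtain ⟨b, c, hbc, hbj, hcj⟩ := exists_two_ne (by omega) j
    have hupper : (N - 1) ∈ {k : ℕ | ∃ f : (i : Fin 3) × Fin (n i) → Fin k,
        IsEInjColoring (completeMultipartiteGraph (fun i : Fin 3 => Fin (n i))) f} := by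
      refine ⟨fun v => if h : v.1 = j then
          ⟨v.2.val, by
            have h2 : n v.1 = N - 2 := by rw [h, hj]
            have h1 := v.2.isLt
            omega⟩
        else ⟨N - 2, by omega⟩, ?_⟩
      rintro ⟨iu, au⟩ ⟨iv, av⟩ ⟨⟨ix, ax⟩, ⟨iy, ay⟩, hux, huy, huv, hxy, hxv, hyv, a1, a2, a3⟩
      have a1' : iu ≠ ix := by simpa using a1
      have a2' : ix ≠ iy := by simpa using a2
      have a3' : iy ≠ iv := by simpa using a3
      by_cases hu : iu = j <;> by_cases hv : iv = j
      · subst hu; subst hv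
        beta_reduce
        rw [dif_pos rfl, dif_pos rfl]
        simp only [ne_eq, Fin.mk.injEq]
        intro h
        exact huv (by rw [Fin.val_injective h])
      · beta_reduce
        rw [dif_pos hu, dif_neg hv]
        simp only [ne_eq, Fin.mk.injEq]
        have h2 : n iu = N - 2 := by rw [hu, hj]
        have := au.isLt
        omega
      · beta_reduce
        rw [dif_neg hu, dif_pos hv]
        simp only [ne_eq, Fin.mk.injEq]
        have h2 : n iv = N - 2 := by rw [hv, hj]
        have := av.isLt
        omega
      · exfalso
        have h1u : n iu = 1 := hother iu hu
        have h1v : n iv = 1 := hother iv hv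
        have huv1 : iu ≠ iv := by
          intro h; subst h
          exact huv (by
            rw [show au = av from Fin.ext (by have := au.isLt; have := av.isLt; omega)])
        have hxj : ix = j := by
          have hdb : ix ≠ iv := by
            intro h; subst h
            exact hxv (by
              rw [show ax = av from Fin.ext (by have := ax.isLt; have := av.isLt; omega)])
          exact fin3_pigeon huv1 hu hv (Ne.symm a1') hdb
        have hyj : iy = j := by
          have hdb : iy ≠ iu := by
            intro h; subst h
            exact huy (by
              rw [show au = ay from Fin.ext (by have := au.isLt; have := ay.isLt; omega)])
          exact fin3_pigeon (Ne.symm huv1) hv hu a3' hdb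
        exact a2' (hxj.trans hyj.symm)
    refine le_antisymm (Nat.sInf_le hupper) (le_csInf ⟨_, hupper⟩ ?_)
    rintro k ⟨f, hf⟩
    set t : Fin (N - 1) → (i : Fin 3) × Fin (n i) := fun i =>
      if h : i.val < N - 2 then ⟨j, ⟨i.val, by rw [hj]; exact h⟩⟩ else ⟨b, ⟨0, hn b⟩⟩ with ht
    have hP4 : ∀ i i' : Fin (N - 1), i ≠ i' →
        P4Ends (completeMultipartiteGraph (fun i : Fin 3 => Fin (n i))) (t i) (t i') := by
      intro i i' hne
      by_cases h : i.val < N - 2 <;> by_cases h' : i'.val < N - 2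
      · simp only [ht, dif_pos h, dif_pos h']
        refine P4_same (by omega) hn rfl (mk_ne_mk ?_)
        exact fun hc => hne (Fin.ext (by simpa using hc))
      · simp only [ht, dif_pos h, dif_neg h']
        exact P4_cross_left hn (Ne.symm hbj) c hcj (Ne.symm hbc) (show 2 ≤ n j by omega)
      · simp only [ht, dif_neg h, dif_pos h']
        exact P4_symm (P4_cross_left hn (Ne.symm hbj) c hcj (Ne.symm hbc)
          (show 2 ≤ n j by omega))
      · exfalso
        have := i.isLt; have := i'.isLt
        exact hne (Fin.ext (by omega))
    have hinj : Function.Injective (f ∘ t) := by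
      intro i i' he
      by_contra hne
      exact hf _ _ (hP4 i i' hne) he
    have hcard := Fintype.card_le_of_injective _ hinj
    simpa using hcard
  · -- generic case
    intro hcase1 hcase2
    unfold eChi
    have allP4 : ∀ u v : (i : Fin r) × Fin (n i), u ≠ v →
        P4Ends (completeMultipartiteGraph (fun i : Fin r => Fin (n i))) u v := by
      intro u v huv
      by_cases hsame : u.1 = v.1
      · exact P4_same hr hn hsame huv
      by_cases hr4 : 4 ≤ r
      · obtain ⟨c, d, hcd, hca, hcb, hda, hdb⟩ := exists_two_ne_two hr4 u.1 v.1
        exact P4_of_fsts u v ⟨c, ⟨0, hn c⟩⟩ ⟨d, ⟨0, hn d⟩⟩ (Ne.symm hca)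
          (sig_ne_of_fst (Ne.symm hda)) huv hcd (sig_ne_of_fst hcb) hdb
      have hr3 : r = 3 := by omega
      subst hr3
      obtain ⟨R, hRu, hRv⟩ := exists_one_ne (by omega) u.1 v.1
      have hunivR : ∀ i : Fin 3, i = u.1 ∨ i = v.1 ∨ i = R := by
        intro i
        by_cases h1 : i = u.1; · exact Or.inl h1
        by_cases h2 : i = v.1; · exact Or.inr (Or.inl h2)
        exact Or.inr (Or.inr (fin3_pigeon hsame (Ne.symm hRu) (Ne.symm hRv) h1 h2))
      have hsum : N = n u.1 + n v.1 + n R := by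
        have huniv : ({u.1, v.1, R} : Finset (Fin 3)) = Finset.univ := by
          apply Finset.eq_univ_iff_forall.mpr
          intro i
          rcases hunivR i with h | h | h <;> simp [h]
        rw [hN, ← huniv,
          Finset.sum_insert (by simp [hsame, (Ne.symm hRu : u.1 ≠ R)]),
          Finset.sum_insert (by simp [(Ne.symm hRv : v.1 ≠ R)]),
          Finset.sum_singleton]
        omega
      have h2 : 2 ≤ n u.1 ∨ 2 ≤ n v.1 := by
        by_contra hcon
        push_neg at hcon
        have hu1 : n u.1 = 1 := by have := hn u.1; omega
        have hv1 : n v.1 = 1 := by have := hn v.1; omega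
        by_cases hR2 : 2 ≤ n R
        · refine hcase2 ⟨rfl, by omega, R, by omega, fun i hi => ?_⟩
          rcases hunivR i with h | h | h
          · rw [h]; exact hu1
          · rw [h]; exact hv1
          · exact absurd h hi
        · have hR1 : n R = 1 := by have := hn R; omega
          refine hcase1 ⟨rfl, fun i => ?_⟩
          rcases hunivR i with h | h | h <;> rw [h] <;> assumption
      rcases h2 with h2 | h2
      · exact P4_cross_left hn hsame R hRu hRv h2
      · exact P4_symm (P4_cross_left hn (Ne.symm hsame) R hRv hRu h2)
    refine le_antisymm (Nat.sInf_le hNS) (le_csInf ⟨N, hNS⟩ ?_)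
    rintro k ⟨f, hf⟩
    have hinj : Function.Injective f := by
      intro a b he
      by_contra hne
      exact hf a b (allP4 a b hne) he
    calc N = Fintype.card ((i : Fin r) × Fin (n i)) := cardV.symm
      _ ≤ Fintype.card (Fin k) := Fintype.card_le_of_injective f hinj
      _ = k := Fintype.card_fin k
end

section
/- For all m ≥ 2 and n ≥ 2, the e-injective chromatic number of the grid graph P_m □ P_n (the Cartesian product of the path graphs P_m and P_n) equals 2. -/
open SimpleGraph

theorem stmt_17 (m n : ℕ) (hm : 2 ≤ m) (hn : 2 ≤ n) :
    eChi ((pathGraph m).boxProd (pathGraph n)) = 2 := by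
  have hadj : ∀ u v : Fin m × Fin n, ((pathGraph m).boxProd (pathGraph n)).Adj u v →
      (u.1.val + u.2.val) % 2 ≠ (v.1.val + v.2.val) % 2 := by
    intro u v h
    rw [SimpleGraph.boxProd_adj] at h
    rcases h with ⟨h1, h2⟩ | ⟨h1, h2⟩ <;>
      rw [SimpleGraph.pathGraph_adj] at h1 <;>
      [have := Fin.val_eq_val u.2 v.2; have := Fin.val_eq_val u.1 v.1] <;>
      omega
  have h2 : (2 : ℕ) ∈ {k : ℕ | ∃ f : Fin m × Fin n → Fin k,
      IsEInjColoring ((pathGraph m).boxProd (pathGraph n)) f} := by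
    refine ⟨fun p => ⟨(p.1.val + p.2.val) % 2, by omega⟩, ?_⟩
    rintro u v ⟨x, y, _, _, _, _, _, _, h1, h2, h3⟩
    have a1 := hadj _ _ h1
    have a2 := hadj _ _ h2
    have a3 := hadj _ _ h3
    simp only [Fin.mk.injEq, ne_eq]
    omega
  refine le_antisymm (Nat.sInf_le h2) (le_csInf ⟨2, h2⟩ ?_)
  rintro k ⟨f, hf⟩
  by_contra hk
  interval_cases k
  · exact (f (⟨0, by omega⟩, ⟨0, by omega⟩)).elim0
  · have hp : P4Ends ((pathGraph m).boxProd (pathGraph n))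
        (⟨0, by omega⟩, ⟨0, by omega⟩) (⟨0, by omega⟩, ⟨1, by omega⟩) := by
      refine ⟨(⟨1, by omega⟩, ⟨0, by omega⟩), (⟨1, by omega⟩, ⟨1, by omega⟩),
        ?_, ?_, ?_, ?_, ?_, ?_, ?_, ?_, ?_⟩ <;>
        simp [Prod.ext_iff, Fin.ext_iff, SimpleGraph.boxProd_adj, SimpleGraph.pathGraph_adj]
    exact hf _ _ hp (Subsingleton.elim _ _)
end

section
/- For the prism graph D_n = K_2 □ C_n (the Cartesian product of the complete graph on 2 vertices with the cycle C_n, n ≥ 3): χ_ei(D_3) = 6; χ_ei(D_5) = 5; χ_ei(D_7) = 4; χ_ei(D_n) = 2 if n ≥ 4 is even; and χ_ei(D_n) = 3 if n ≥ 9 is odd. -/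
open SimpleGraph

/-! ### Auxiliary machinery -/

set_option maxHeartbeats 4000000
set_option synthInstance.maxSize 4000

instance boxProdAdjDecidable {V W : Type*} {G : SimpleGraph V} {H : SimpleGraph W}
    [DecidableEq V] [DecidableEq W] [DecidableRel G.Adj] [DecidableRel H.Adj] :
    DecidableRel (G.boxProd H).Adj := fun _ _ =>
  decidable_of_iff _ (boxProd_adj ..).symm

instance {V : Type*} [Fintype V] [DecidableEq V] (G : SimpleGraph V) [DecidableRel G.Adj]
    (u v : V) : Decidable (P4Ends G u v) := by unfold P4Ends; infer_instance

instance {V : Type*} [Fintype V] [DecidableEq V] (G : SimpleGraph V) [DecidableRel G.Adj]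
    {k : ℕ} (f : V → Fin k) : Decidable (IsEInjColoring G f) := by
  unfold IsEInjColoring; infer_instance

/-- cyclic difference ±1 (in linearized form, for values `< n`) -/
def stp (n x y : ℕ) : Prop := x + 1 = y ∨ x + 1 = n + y ∨ y + 1 = x ∨ y + 1 = n + x
/-- cyclic difference ±2 -/
def stp2 (n x y : ℕ) : Prop := x + 2 = y ∨ x + 2 = n + y ∨ y + 2 = x ∨ y + 2 = n + x
/-- cyclic difference ±3 -/
def stp3 (n x y : ℕ) : Prop := x + 3 = y ∨ x + 3 = n + y ∨ y + 3 = x ∨ y + 3 = n + x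

theorem mod2n {n x : ℕ} (h : x < 2 * n) :
    x % n = if x < n then x else x - n := by
  split
  · exact Nat.mod_eq_of_lt ‹_›
  · rw [Nat.mod_eq_sub_mod (by omega), Nat.mod_eq_of_lt (by omega)]

theorem cycle_adj_iff {n : ℕ} (hn : 2 ≤ n) (a b : Fin n) :
    (cycleGraph n).Adj a b ↔ stp n a.val b.val := by
  rw [cycleGraph_adj']
  have ha := a.isLt; have hb := b.isLt
  rw [Fin.sub_def, Fin.sub_def]
  simp only [stp]
  rw [mod2n (by omega), mod2n (by omega)]
  split <;> split <;> omega

/-- purely arithmetic form of the characterization of `P₄`-endpoints in a prism -/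
theorem char_nat {n : ℕ} (hn : 9 ≤ n) {s0 s1 s2 s3 c0 c1 c2 c3 : ℕ}
    (hs0 : s0 < 2) (hs1 : s1 < 2) (hs2 : s2 < 2) (hs3 : s3 < 2)
    (hc0 : c0 < n) (hc1 : c1 < n) (hc2 : c2 < n) (hc3 : c3 < n)
    (e1 : (s0 ≠ s1 ∧ c0 = c1) ∨ (stp n c0 c1 ∧ s0 = s1))
    (e2 : (s1 ≠ s2 ∧ c1 = c2) ∨ (stp n c1 c2 ∧ s1 = s2))
    (e3 : (s2 ≠ s3 ∧ c2 = c3) ∨ (stp n c2 c3 ∧ s2 = s3))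
    (d02 : ¬(s0 = s2 ∧ c0 = c2)) (d03 : ¬(s0 = s3 ∧ c0 = c3)) (d13 : ¬(s1 = s3 ∧ c1 = c3)) :
    (s0 = s3 ∧ (stp n c0 c3 ∨ stp3 n c0 c3)) ∨
    (s0 ≠ s3 ∧ (c0 = c3 ∨ stp2 n c0 c3)) := by
  unfold stp stp2 stp3 at *
  omega

theorem adj_cases {n : ℕ} (hn : 2 ≤ n) {p q : Fin 2 × Fin n}
    (h : ((⊤ : SimpleGraph (Fin 2)).boxProd (cycleGraph n)).Adj p q) :
    (p.1.val ≠ q.1.val ∧ p.2.val = q.2.val) ∨ (stp n p.2.val q.2.val ∧ p.1.val = q.1.val) := by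
  rw [boxProd_adj] at h
  rcases h with ⟨h1, h2⟩ | ⟨h1, h2⟩
  · exact Or.inl ⟨fun hh => h1.ne (Fin.ext hh), congrArg Fin.val h2⟩
  · exact Or.inr ⟨(cycle_adj_iff hn _ _).mp h1, congrArg Fin.val h2⟩

/-- Characterization of `P₄`-endpoints in the prism `K₂ □ Cₙ` for `n ≥ 9`. -/
theorem char {n : ℕ} (hn : 9 ≤ n) {u v : Fin 2 × Fin n}
    (h : P4Ends ((⊤ : SimpleGraph (Fin 2)).boxProd (cycleGraph n)) u v) :
    (u.1.val = v.1.val ∧ (stp n u.2.val v.2.val ∨ stp3 n u.2.val v.2.val)) ∨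
    (u.1.val ≠ v.1.val ∧ (u.2.val = v.2.val ∨ stp2 n u.2.val v.2.val)) := by
  obtain ⟨x, y, hux, huy, huv, hxy, hxv, hyv, a1, a2, a3⟩ := h
  have e1 := adj_cases (by omega) a1
  have e2 := adj_cases (by omega) a2
  have e3 := adj_cases (by omega) a3
  have d02 : ¬(u.1.val = y.1.val ∧ u.2.val = y.2.val) := fun ⟨h1, h2⟩ =>
    huy (Prod.ext (Fin.ext h1) (Fin.ext h2))
  have d03 : ¬(u.1.val = v.1.val ∧ u.2.val = v.2.val) := fun ⟨h1, h2⟩ =>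
    huv (Prod.ext (Fin.ext h1) (Fin.ext h2))
  have d13 : ¬(x.1.val = v.1.val ∧ x.2.val = v.2.val) := fun ⟨h1, h2⟩ =>
    hxv (Prod.ext (Fin.ext h1) (Fin.ext h2))
  exact char_nat hn u.1.isLt x.1.isLt y.1.isLt v.1.isLt
    u.2.isLt x.2.isLt y.2.isLt v.2.isLt e1 e2 e3 d02 d03 d13

/-- The coloring pattern used for odd `n ≥ 9`. -/
def gnat (n a : ℕ) : ℕ :=
  if a + 5 = n then 2 else if a + 4 = n then 1 else if a + 3 = n then 2
  else if a + 2 = n then 0 else if a + 1 = n then 2 else a % 2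

theorem gnat_lt (n a : ℕ) : gnat n a < 3 := by unfold gnat; split_ifs <;> omega

theorem gnat_conflict {n a b : ℕ} (hn : 9 ≤ n) (hodd : n % 2 = 1) (ha : a < n) (hb : b < n)
    (h : a + 1 = b ∨ a + 1 = n + b ∨ b + 1 = a ∨ b + 1 = n + a ∨
         a + 3 = b ∨ a + 3 = n + b ∨ b + 3 = a ∨ b + 3 = n + a) :
    gnat n a ≠ gnat n b := by
  unfold gnat; split_ifs <;> omega

theorem eChi_eq' {V : Type*} (G : SimpleGraph V) {k : ℕ} (hk : 1 ≤ k)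
    (h1 : ∃ f : V → Fin k, IsEInjColoring G f)
    (h2 : ∀ f : V → Fin (k - 1), ¬ IsEInjColoring G f) : eChi G = k := by
  have hne : {m : ℕ | ∃ f : V → Fin m, IsEInjColoring G f}.Nonempty := ⟨k, h1⟩
  rw [eChi]
  refine le_antisymm (Nat.sInf_le h1) ?_
  by_contra hlt
  push_neg at hlt
  obtain ⟨f, hf⟩ := Nat.sInf_mem hne
  refine h2 (fun v => Fin.castLE (show sInf {m : ℕ | ∃ f : V → Fin m, IsEInjColoring G f} ≤ k - 1 by omega) (f v)) ?_
  intro a b hp he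
  exact hf a b hp (Fin.castLE_injective _ he)

/-! ### Small cases by `decide` -/

theorem conf3 : ∀ u v : Fin 2 × Fin 3, u ≠ v →
    P4Ends ((⊤ : SimpleGraph (Fin 2)).boxProd (cycleGraph 3)) u v := by decide

theorem color3 : IsEInjColoring ((⊤ : SimpleGraph (Fin 2)).boxProd (cycleGraph 3))
    (fun p => (⟨p.1.val * 3 + p.2.val, by omega⟩ : Fin 6)) := by decide

theorem conf5 : ∀ a b : Fin 5, a ≠ b →
    P4Ends ((⊤ : SimpleGraph (Fin 2)).boxProd (cycleGraph 5)) (0, a) (0, b) := by decide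

theorem color5 : IsEInjColoring ((⊤ : SimpleGraph (Fin 2)).boxProd (cycleGraph 5))
    (fun p => (⟨(p.1.val + p.2.val) % 5, by omega⟩ : Fin 5)) := by decide

theorem conf7 : ∀ a b c : Fin 7, a = b ∨ a = c ∨ b = c ∨
    P4Ends ((⊤ : SimpleGraph (Fin 2)).boxProd (cycleGraph 7)) (0, a) (0, b) ∨
    P4Ends ((⊤ : SimpleGraph (Fin 2)).boxProd (cycleGraph 7)) (0, a) (0, c) ∨
    P4Ends ((⊤ : SimpleGraph (Fin 2)).boxProd (cycleGraph 7)) (0, b) (0, c) := by decide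

def g7 : Fin 7 → Fin 4 := ![0, 2, 0, 2, 1, 3, 1]

theorem color7 : IsEInjColoring ((⊤ : SimpleGraph (Fin 2)).boxProd (cycleGraph 7))
    (fun p => if p.1 = 0 then g7 p.2 else g7 (p.2 + 1)) := by decide

/-! ### Even case -/

theorem even_flip {n : ℕ} (hn : 2 ≤ n) (he : n % 2 = 0) {p q : Fin 2 × Fin n}
    (h : ((⊤ : SimpleGraph (Fin 2)).boxProd (cycleGraph n)).Adj p q) :
    (p.1.val + p.2.val) % 2 ≠ (q.1.val + q.2.val) % 2 := by
  have h1 := p.1.isLt; have h2 := q.1.isLt; have h3 := p.2.isLt; have h4 := q.2.isLt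
  rcases adj_cases hn h with ⟨ha, hb⟩ | ⟨ha, hb⟩
  · omega
  · unfold stp at ha; omega

theorem even_upper {n : ℕ} (hn : 4 ≤ n) (he : n % 2 = 0) :
    IsEInjColoring ((⊤ : SimpleGraph (Fin 2)).boxProd (cycleGraph n))
      (fun p => (⟨(p.1.val + p.2.val) % 2, by omega⟩ : Fin 2)) := by
  rintro u v ⟨x, y, hux, huy, huv, hxy, hxv, hyv, a1, a2, a3⟩ heq
  have f1 := even_flip (by omega) he a1
  have f2 := even_flip (by omega) he a2
  have f3 := even_flip (by omega) he a3
  have hv : (u.1.val + u.2.val) % 2 = (v.1.val + v.2.val) % 2 := congrArg Fin.val heq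
  omega

/-- A `P₄` exists in the prism (for `n ≥ 4`), so one color is not enough. -/
theorem exists_p4 {n : ℕ} (hn : 4 ≤ n) :
    P4Ends ((⊤ : SimpleGraph (Fin 2)).boxProd (cycleGraph n))
      (0, ⟨0, by omega⟩) (0, ⟨3, by omega⟩) := by
  have adj : ∀ (a b : ℕ) (ha : a < n) (hb : b < n), a + 1 = b →
      ((⊤ : SimpleGraph (Fin 2)).boxProd (cycleGraph n)).Adj (0, ⟨a, ha⟩) (0, ⟨b, hb⟩) := by
    intro a b ha hb hab
    rw [boxProd_adj]
    exact Or.inr ⟨(cycle_adj_iff (by omega) _ _).mpr (Or.inl hab), rfl⟩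
  refine ⟨(0, ⟨1, by omega⟩), (0, ⟨2, by omega⟩), ?_, ?_, ?_, ?_, ?_, ?_, ?_, ?_, ?_⟩
  · simp [Prod.ext_iff, Fin.ext_iff]
  · simp [Prod.ext_iff, Fin.ext_iff]
  · simp [Prod.ext_iff, Fin.ext_iff]
  · simp [Prod.ext_iff, Fin.ext_iff]
  · simp [Prod.ext_iff, Fin.ext_iff]
  · simp [Prod.ext_iff, Fin.ext_iff]
  · exact adj 0 1 (by omega) (by omega) rfl
  · exact adj 1 2 (by omega) (by omega) rfl
  · exact adj 2 3 (by omega) (by omega) rfl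

theorem no_one_coloring {n : ℕ} (hn : 4 ≤ n) (f : Fin 2 × Fin n → Fin 1) :
    ¬ IsEInjColoring ((⊤ : SimpleGraph (Fin 2)).boxProd (cycleGraph n)) f := fun hf =>
  hf _ _ (exists_p4 hn) (Subsingleton.elim _ _)

/-! ### Odd case -/

theorem odd_upper {n : ℕ} (hn : 9 ≤ n) (ho : n % 2 = 1) :
    IsEInjColoring ((⊤ : SimpleGraph (Fin 2)).boxProd (cycleGraph n))
      (fun p => (⟨gnat n (if p.1.val = 0 then p.2.val else (p.2.val + 1) % n),
        gnat_lt n _⟩ : Fin 3)) := by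
  intro u v hp heq
  have hc := char hn hp
  have hv : gnat n (if u.1.val = 0 then u.2.val else (u.2.val + 1) % n)
      = gnat n (if v.1.val = 0 then v.2.val else (v.2.val + 1) % n) := congrArg Fin.val heq
  have h1u := u.1.isLt; have h1v := v.1.isLt
  have ha := u.2.isLt; have hb := v.2.isLt
  have hma : (u.2.val + 1) % n = if u.2.val + 1 < n then u.2.val + 1 else u.2.val + 1 - n :=
    mod2n (by omega)
  have hmb : (v.2.val + 1) % n = if v.2.val + 1 < n then v.2.val + 1 else v.2.val + 1 - n :=
    mod2n (by omega)
  by_cases h0u : u.1.val = 0 <;> by_cases h0v : v.1.val = 0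
  · rw [if_pos h0u, if_pos h0v] at hv
    rcases hc with ⟨_, hd⟩ | ⟨hss, _⟩
    · exact gnat_conflict hn ho ha hb (by unfold stp stp3 at hd; omega) hv
    · omega
  · rw [if_pos h0u, if_neg h0v] at hv
    rcases hc with ⟨hss, _⟩ | ⟨_, hd⟩
    · omega
    · exact gnat_conflict hn ho ha (Nat.mod_lt _ (by omega))
        (by unfold stp2 at hd; split at hmb <;> omega) hv
  · rw [if_neg h0u, if_pos h0v] at hv
    rcases hc with ⟨hss, _⟩ | ⟨_, hd⟩
    · omega
    · exact gnat_conflict hn ho (Nat.mod_lt _ (by omega)) hb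
        (by unfold stp2 at hd; split at hma <;> omega) hv
  · rw [if_neg h0u, if_neg h0v] at hv
    rcases hc with ⟨_, hd⟩ | ⟨hss, _⟩
    · exact gnat_conflict hn ho (Nat.mod_lt _ (by omega)) (Nat.mod_lt _ (by omega))
        (by unfold stp stp3 at hd; split at hma <;> split at hmb <;> omega) hv
    · omega

theorem odd_no_two {n : ℕ} (hn : 9 ≤ n) (ho : n % 2 = 1) (f : Fin 2 × Fin n → Fin 2) :
    ¬ IsEInjColoring ((⊤ : SimpleGraph (Fin 2)).boxProd (cycleGraph n)) f := by
  intro hf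
  -- consecutive vertices on the top cycle get distinct colors
  have key : ∀ a b : Fin n, stp n a.val b.val → f (0, a) ≠ f (0, b) := by
    intro a b hst
    have hab : a.val ≠ b.val := by unfold stp at hst; have := a.isLt; have := b.isLt; omega
    refine hf _ _ ⟨(1, a), (1, b), ?_, ?_, ?_, ?_, ?_, ?_, ?_, ?_, ?_⟩
    · simp [Prod.ext_iff]
    · simp [Prod.ext_iff]
    · simp [Prod.ext_iff, Fin.ext_iff, hab]
    · simp [Prod.ext_iff, Fin.ext_iff, hab]
    · simp [Prod.ext_iff, Fin.ext_iff, hab]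
    · simp [Prod.ext_iff]
    · rw [boxProd_adj]
      exact Or.inl ⟨show (⊤ : SimpleGraph (Fin 2)).Adj 0 1 by decide, rfl⟩
    · rw [boxProd_adj]; exact Or.inr ⟨(cycle_adj_iff (by omega) _ _).mpr hst, rfl⟩
    · rw [boxProd_adj]
      exact Or.inl ⟨show (⊤ : SimpleGraph (Fin 2)).Adj 1 0 by decide, rfl⟩
  set F : ℕ → ℕ := fun j => (f (0, ⟨j % n, Nat.mod_lt _ (by omega)⟩)).val with hF
  have hstep : ∀ j : ℕ, F (j + 1) ≠ F j := by
    intro j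
    have hm : (j % n + 1) % n = (j + 1) % n := Nat.mod_add_mod j n 1
    have hm2 : (j % n + 1) % n = if j % n + 1 < n then j % n + 1 else j % n + 1 - n :=
      mod2n (by have := Nat.mod_lt j (show 0 < n by omega); omega)
    have hst : stp n ((j + 1) % n) (j % n) := by
      have := Nat.mod_lt j (show 0 < n by omega)
      unfold stp; split at hm2 <;> omega
    intro he
    have he' : f (0, (⟨(j + 1) % n, Nat.mod_lt _ (by omega)⟩ : Fin n))
        = f (0, (⟨j % n, Nat.mod_lt _ (by omega)⟩ : Fin n)) := Fin.ext he
    exact key _ _ hst he'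
  have hlt : ∀ j : ℕ, F j < 2 := fun j => (f _).isLt
  have hpar : ∀ j : ℕ, F j % 2 = (F 0 + j) % 2 := by
    intro j
    induction j with
    | zero => omega
    | succ k ih => have := hstep k; have := hlt k; have := hlt (k + 1); omega
  have hFn : F n = F 0 := by
    simp only [hF]
    congr 1
    exact congrArg _ (Prod.ext rfl (Fin.ext (by simp)))
  have := hpar n
  omega

/-! ### The main theorem -/

theorem stmt_18 (n : ℕ) (hn : 3 ≤ n) :
    (n = 3 → eChi ((⊤ : SimpleGraph (Fin 2)).boxProd (cycleGraph n)) = 6) ∧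
    (n = 5 → eChi ((⊤ : SimpleGraph (Fin 2)).boxProd (cycleGraph n)) = 5) ∧
    (n = 7 → eChi ((⊤ : SimpleGraph (Fin 2)).boxProd (cycleGraph n)) = 4) ∧
    (4 ≤ n → Even n → eChi ((⊤ : SimpleGraph (Fin 2)).boxProd (cycleGraph n)) = 2) ∧
    (9 ≤ n → Odd n → eChi ((⊤ : SimpleGraph (Fin 2)).boxProd (cycleGraph n)) = 3) := by
  refine ⟨?_, ?_, ?_, ?_, ?_⟩
  · rintro rfl
    refine eChi_eq' _ (by norm_num) ⟨_, color3⟩ ?_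
    intro f hf
    obtain ⟨u, v, hne, heq⟩ := Fintype.exists_ne_map_eq_of_card_lt f (by simp)
    exact hf u v (conf3 u v hne) heq
  · rintro rfl
    refine eChi_eq' _ (by norm_num) ⟨_, color5⟩ ?_
    intro f hf
    obtain ⟨a, b, hne, heq⟩ :=
      Fintype.exists_ne_map_eq_of_card_lt (fun a : Fin 5 => f (0, a)) (by simp)
    exact hf _ _ (conf5 a b hne) heq
  · rintro rfl
    refine eChi_eq' _ (by norm_num) ⟨_, color7⟩ ?_
    intro f hf
    obtain ⟨y, hy⟩ := Fintype.exists_lt_card_fiber_of_mul_lt_card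
      (f := fun a : Fin 7 => f (0, a)) (n := 2) (by simp)
    obtain ⟨t, hts, htc⟩ := Finset.exists_subset_card_eq hy
    obtain ⟨a, b, c, hab, hac, hbc, rfl⟩ := Finset.card_eq_three.mp htc
    have hfa : f (0, a) = y := (Finset.mem_filter.mp (hts (by simp))).2
    have hfb : f (0, b) = y := (Finset.mem_filter.mp (hts (by simp))).2
    have hfc : f (0, c) = y := (Finset.mem_filter.mp (hts (by simp))).2
    rcases conf7 a b c with h | h | h | h | h | h
    · exact hab h
    · exact hac h
    · exact hbc h
    · exact hf _ _ h (hfa.trans hfb.symm)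
    · exact hf _ _ h (hfa.trans hfc.symm)
    · exact hf _ _ h (hfb.trans hfc.symm)
  · intro h4 he
    refine eChi_eq' _ (by norm_num) ⟨_, even_upper h4 (Nat.even_iff.mp he)⟩ ?_
    exact fun f => no_one_coloring h4 f
  · intro h9 ho
    have ho' : n % 2 = 1 := Nat.odd_iff.mp ho
    refine eChi_eq' _ (by norm_num) ⟨_, odd_upper h9 ho'⟩ ?_
    exact fun f => odd_no_two h9 ho' f
end
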